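/- Along the perpendicular bisector of the centers of two circular uncertain objects, the nearest-neighbor probability tends to 1/2 at infinity: let o₁ = B̄(c₁,r₁) and o₂ = B̄(c₂,r₂) be closed disks in the plane with r₁, r₂ > 0 and c₁ ≠ c₂, and let p(x) = (U(c₁,r₁) ⊗ U(c₂,r₂)) {(u,v) | dist(u,x) < dist(v,x)}. Then p(x) → 1/2 as x tends to infinity along the set L = {x | dist(x,c₁) = dist(x,c₂)}; formally, the function p tends to 1/2 along the filter (cocompact filter on the plane) ⊓ (principal filter of L). -/

import Mathlib

open MeasureTheory
open scoped ENNReal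

/-- The uniform probability measure on the closed ball of center `c` and radius `r`
in the Euclidean plane. -/
noncomputable def unifBall (c : EuclideanSpace ℝ (Fin 2)) (r : ℝ) :
    Measure (EuclideanSpace ℝ (Fin 2)) :=
  (volume (Metric.closedBall c r))⁻¹ • volume.restrict (Metric.closedBall c r)

/-!
Parametrize the bisector as `x = m + t • e` with `e ⊥ c₁ - c₂`. Then
`dist v x ^ 2 - dist u x ^ 2 = 2 t ⟪u - v, e⟫ + const`, so as `t → ±∞` the event
`dist u x < dist v x` converges pointwise to `± ⟪u - v, e⟫ > 0` off the null set
`⟪u - v, e⟫ = 0`, and dominated convergence applies. The point reflection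
`(u, v) ↦ (2 c₁ - u, 2 c₂ - v)` preserves the product of the uniform measures and, since
`e ⊥ c₁ - c₂`, changes the sign of `⟪u - v, e⟫`; hence both limit events have probability `1/2`.
-/

open Filter Topology ProbabilityTheory Module
open scoped RealInnerProductSpace

theorem Filter.cocompact_inf_principal_le_map {X Y : Type*} [TopologicalSpace X]
    [TopologicalSpace Y] {f : X → Y} (hf : Continuous f) {s : Set Y} (hs : s ⊆ Set.range f) :
    cocompact Y ⊓ 𝓟 s ≤ map f (cocompact X) :=
  calc cocompact Y ⊓ 𝓟 s
    _ ≤ cocompact Y ⊓ 𝓟 (Set.range f) := inf_le_inf_left _ (principal_mono.2 hs)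
    _ = map f (comap f (cocompact Y)) := (map_comap _ _).symm
    _ ≤ map f (cocompact X) := map_mono (comap_cocompact_le hf)

theorem MeasureTheory.MeasurePreserving.cond {α β : Type*} [MeasurableSpace α]
    [MeasurableSpace β] {μ : Measure α} {ν : Measure β} {f : α → β}
    (hf : MeasurePreserving f μ ν) {s : Set β} (hs : MeasurableSet s) :
    MeasurePreserving f μ[|f ⁻¹' s] ν[|s] := by
  rw [ProbabilityTheory.cond, ProbabilityTheory.cond, hf.measure_preimage hs.nullMeasurableSet]
  exact (hf.restrict_preimage hs).smul_measure _

theorem MeasureTheory.measure_setOf_pos_eq_half {α : Type*} [MeasurableSpace α] {μ : Measure α}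
    [IsProbabilityMeasure μ] {f : α → ℝ} (hf : Measurable f) (hf₀ : μ {x | f x = 0} = 0)
    {T : α → α} (hT : MeasurePreserving T μ μ) (hfT : ∀ x, f (T x) = -f x) :
    μ {x | 0 < f x} = 1 / 2 := by
  have hpos : MeasurableSet {x | 0 < f x} := measurableSet_lt measurable_const hf
  have hneg : MeasurableSet {x | f x < 0} := measurableSet_lt hf measurable_const
  have hsymm : μ {x | 0 < f x} = μ {x | f x < 0} := by
    rw [← hT.measure_preimage hpos.nullMeasurableSet]
    simp only [Set.preimage_ofPred_eq, hfT, neg_pos]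
  have hsum : μ {x | 0 < f x} + μ {x | f x < 0} = 1 := by
    have hdisj : Disjoint {x | 0 < f x} {x | f x < 0} :=
      Set.disjoint_left.2 fun _ h₁ h₂ => lt_asymm (Set.mem_ofPred.1 h₁) h₂
    have hunion : {x | 0 < f x} ∪ {x | f x < 0} = {x | f x = 0}ᶜ :=
      Set.ext fun _ => by simpa only [Set.mem_union, Set.mem_ofPred, Set.mem_compl_iff,
        or_comm] using lt_or_lt_iff_ne
    rw [← measure_union hdisj hneg, hunion,
      prob_compl_eq_one_iff (measurableSet_eq_fun hf measurable_const)]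
    exact hf₀
  rw [ENNReal.eq_div_iff two_ne_zero ENNReal.ofNat_ne_top, two_mul]
  nth_rewrite 2 [hsymm]
  exact hsum

section InnerProductSpace

variable {E : Type*} [NormedAddCommGroup E] [InnerProductSpace ℝ E]

theorem dist_sq_sub_dist_sq_add_smul (u v a e : E) (t : ℝ) :
    dist v (a + t • e) ^ 2 - dist u (a + t • e) ^ 2
      = 2 * ⟪u - v, e⟫ * t + (‖v - a‖ ^ 2 - ‖u - a‖ ^ 2) := by
  simp only [dist_eq_norm, sub_add_eq_sub_sub, norm_sub_sq_real, inner_smul_right, inner_sub_left]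
  ring

theorem eventually_dist_lt_dist_add_smul {u v : E} (a : E) {e : E} (h : 0 < ⟪u - v, e⟫) :
    ∀ᶠ t : ℝ in atTop, dist u (a + t • e) < dist v (a + t • e) := by
  have hlim : Tendsto (fun t : ℝ => dist v (a + t • e) ^ 2 - dist u (a + t • e) ^ 2)
      atTop atTop := by
    simp only [dist_sq_sub_dist_sq_add_smul]
    exact tendsto_atTop_add_const_right _ _ (tendsto_id.const_mul_atTop (by positivity))
  filter_upwards [hlim.eventually_gt_atTop 0] with t ht
  exact lt_of_pow_lt_pow_left₀ 2 dist_nonneg (sub_pos.1 ht)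

theorem exists_perpBisector_subset_range_add_smul (hE : finrank ℝ E = 2) {c₁ c₂ : E}
    (hc : c₁ ≠ c₂) :
    ∃ e : E, e ≠ 0 ∧ ⟪c₁ - c₂, e⟫ = 0 ∧
      {x | dist x c₁ = dist x c₂} ⊆ Set.range fun t : ℝ => midpoint ℝ c₁ c₂ + t • e := by
  have : Fact (finrank ℝ E = 1 + 1) := ⟨hE⟩
  obtain ⟨v, hv, hspan⟩ := finrank_eq_one_iff'.1 <|
    Submodule.finrank_orthogonal_span_singleton (𝕜 := ℝ) (sub_ne_zero.2 hc)
  refine ⟨v, by simpa using hv, Submodule.mem_orthogonal_singleton_iff_inner_right.1 v.2, ?_⟩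
  intro x hx
  have hxm : x - midpoint ℝ c₁ c₂ ∈ (ℝ ∙ (c₁ - c₂))ᗮ := by
    rw [Submodule.mem_orthogonal_singleton_iff_inner_left, ← neg_sub c₂, inner_neg_right,
      neg_eq_zero]
    exact AffineSubspace.mem_perpBisector_iff_inner_eq_zero.1
      (AffineSubspace.mem_perpBisector_iff_dist_eq.2 hx)
  obtain ⟨t, ht⟩ := hspan ⟨_, hxm⟩
  refine ⟨t, ?_⟩
  simp only [← Submodule.coe_smul, ht, add_sub_cancel]

variable [MeasurableSpace E] [BorelSpace E]

theorem MeasureTheory.Measure.addHaar_prod_setOf_inner_sub_eq_zero [FiniteDimensional ℝ E]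
    (μ ν : Measure E) [IsAddHaarMeasure μ] [IsAddHaarMeasure ν] {e : E} (he : e ≠ 0) :
    μ.prod ν {uv | ⟪uv.1 - uv.2, e⟫ = 0} = 0 := by
  set φ : E × E →ₗ[ℝ] ℝ := innerₛₗ ℝ e ∘ₗ (LinearMap.fst ℝ E E - LinearMap.snd ℝ E E)
  have hker : {uv : E × E | ⟪uv.1 - uv.2, e⟫ = 0} = LinearMap.ker φ := by
    ext uv
    simp [φ, real_inner_comm]
  have hne : LinearMap.ker φ ≠ ⊤ := fun h => he <| by
    have : φ (e, 0) = 0 := by rw [LinearMap.ker_eq_top.1 h, LinearMap.zero_apply]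
    simpa [φ] using this
  rw [hker]
  exact addHaar_submodule _ _ hne

theorem tendsto_measure_dist_lt_dist_add_smul [SecondCountableTopology E] {μ : Measure (E × E)}
    [IsFiniteMeasure μ] (a e : E) (hμ : μ {uv | ⟪uv.1 - uv.2, e⟫ = 0} = 0) :
    Tendsto (fun t : ℝ => μ {uv | dist uv.1 (a + t • e) < dist uv.2 (a + t • e)}) atTop
      (𝓝 (μ {uv | 0 < ⟪uv.1 - uv.2, e⟫})) := by
  have hcont : Continuous fun uv : E × E => ⟪uv.1 - uv.2, e⟫ := by fun_prop
  refine tendsto_measure_of_ae_tendsto_indicator_of_isFiniteMeasure _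
    (measurableSet_lt measurable_const hcont.measurable) (fun t => measurableSet_lt
      (by fun_prop) (by fun_prop)) ?_
  refine measure_eq_zero_iff_ae_notMem.1 hμ |>.mono fun ⟨u, v⟩ huv => ?_
  rcases lt_or_gt_of_ne huv with hneg | hpos
  · have hvu : 0 < ⟪v - u, e⟫ := by rw [← neg_sub, inner_neg_left]; linarith
    filter_upwards [eventually_dist_lt_dist_add_smul a hvu] with t ht
    exact iff_of_false ht.not_gt hneg.not_gt
  · filter_upwards [eventually_dist_lt_dist_add_smul a hpos] with t ht
    exact iff_of_true ht hpos

end InnerProductSpace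

local notation "ℝ²" => EuclideanSpace ℝ (Fin 2)

theorem unifBall_eq_cond (c : ℝ²) (r : ℝ) : unifBall c r = volume[|Metric.closedBall c r] := rfl

theorem isProbabilityMeasure_unifBall (c : ℝ²) {r : ℝ} (hr : 0 < r) :
    IsProbabilityMeasure (unifBall c r) :=
  cond_isProbabilityMeasure_of_finite (Metric.measure_closedBall_pos _ _ hr).ne'
    measure_closedBall_lt_top.ne

theorem unifBall_absolutelyContinuous (c : ℝ²) (r : ℝ) : unifBall c r ≪ volume :=
  cond_absolutelyContinuous

theorem measurePreserving_sub_left_unifBall (c : ℝ²) (r : ℝ) :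
    MeasurePreserving (fun u => (c + c) - u) (unifBall c r) (unifBall c r) := by
  have hball : (fun u => (c + c) - u) ⁻¹' Metric.closedBall c r = Metric.closedBall c r := by
    ext u
    simp [dist_eq_norm, sub_sub, norm_sub_rev]
  simpa only [unifBall_eq_cond, hball] using
    (Measure.measurePreserving_sub_left volume (c + c)).cond (s := Metric.closedBall c r)
      measurableSet_closedBall

theorem unifBall_prod_setOf_inner_sub_eq_zero (c₁ c₂ : ℝ²) (r₁ r₂ : ℝ) {e : ℝ²} (he : e ≠ 0) :
    (unifBall c₁ r₁).prod (unifBall c₂ r₂) {uv | ⟪uv.1 - uv.2, e⟫ = 0} = 0 :=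
  ((unifBall_absolutelyContinuous c₁ r₁).prod (unifBall_absolutelyContinuous c₂ r₂))
    (Measure.addHaar_prod_setOf_inner_sub_eq_zero volume volume he)

theorem unifBall_prod_setOf_inner_sub_pos {c₁ c₂ : ℝ²} {r₁ r₂ : ℝ} (hr₁ : 0 < r₁) (hr₂ : 0 < r₂)
    {e : ℝ²} (he : e ≠ 0) (hce : ⟪c₁ - c₂, e⟫ = 0) :
    (unifBall c₁ r₁).prod (unifBall c₂ r₂) {uv | 0 < ⟪uv.1 - uv.2, e⟫} = 1 / 2 := by
  have := isProbabilityMeasure_unifBall c₁ hr₁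
  have := isProbabilityMeasure_unifBall c₂ hr₂
  refine measure_setOf_pos_eq_half (by fun_prop)
    (unifBall_prod_setOf_inner_sub_eq_zero c₁ c₂ r₁ r₂ he)
    ((measurePreserving_sub_left_unifBall c₁ r₁).prod (measurePreserving_sub_left_unifBall c₂ r₂))
    fun uv => ?_
  have : (c₁ + c₁ - uv.1) - (c₂ + c₂ - uv.2) = (2 : ℝ) • (c₁ - c₂) - (uv.1 - uv.2) := by module
  simp [this, inner_sub_left, inner_smul_left, hce]

theorem tendsto_unifBall_prod_dist_lt_dist_add_smul {c₁ c₂ : ℝ²} {r₁ r₂ : ℝ} (hr₁ : 0 < r₁)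
    (hr₂ : 0 < r₂) (a : ℝ²) {e : ℝ²} (he : e ≠ 0) (hce : ⟪c₁ - c₂, e⟫ = 0) :
    Tendsto (fun t : ℝ => (unifBall c₁ r₁).prod (unifBall c₂ r₂)
      {uv | dist uv.1 (a + t • e) < dist uv.2 (a + t • e)}) atTop (𝓝 (1 / 2)) := by
  have := isProbabilityMeasure_unifBall c₁ hr₁
  have := isProbabilityMeasure_unifBall c₂ hr₂
  rw [← unifBall_prod_setOf_inner_sub_pos hr₁ hr₂ he hce]
  exact tendsto_measure_dist_lt_dist_add_smul a e
    (unifBall_prod_setOf_inner_sub_eq_zero c₁ c₂ r₁ r₂ he)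

theorem prob_tendsto_half_along_perpendicular_bisector
    (c₁ c₂ : EuclideanSpace ℝ (Fin 2)) (r₁ r₂ : ℝ)
    (hr₁ : 0 < r₁) (hr₂ : 0 < r₂) (hc : c₁ ≠ c₂) :
    Filter.Tendsto
      (fun x : EuclideanSpace ℝ (Fin 2) =>
        ((unifBall c₁ r₁).prod (unifBall c₂ r₂))
          {uv : EuclideanSpace ℝ (Fin 2) × EuclideanSpace ℝ (Fin 2) |
            dist uv.1 x < dist uv.2 x})
      (Filter.cocompact (EuclideanSpace ℝ (Fin 2)) ⊓
        Filter.principal {x : EuclideanSpace ℝ (Fin 2) | dist x c₁ = dist x c₂})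
      (nhds (1 / 2)) := by
  obtain ⟨e, he, hce, hL⟩ := exists_perpBisector_subset_range_add_smul finrank_euclideanSpace_fin hc
  refine Tendsto.mono_left ?_ (cocompact_inf_principal_le_map (by fun_prop) hL)
  rw [tendsto_map'_iff, cocompact_eq_atBot_atTop, tendsto_sup]
  constructor
  · -- `m + t • e = m + (-t) • (-e)`
    have hneg := tendsto_unifBall_prod_dist_lt_dist_add_smul hr₁ hr₂ (midpoint ℝ c₁ c₂)
      (neg_ne_zero.2 he) (by rwa [inner_neg_right, neg_eq_zero])
    simpa [Function.comp_def, neg_smul, smul_neg] using hneg.comp tendsto_neg_atBot_atTop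
  · exact tendsto_unifBall_prod_dist_lt_dist_add_smul hr₁ hr₂ _ he hce
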